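/- arXiv:2405.00619 — 2 statements merged into one kernel-verified Lean document; each statement's English description precedes it below -/
import Mathlib

section
/- Fix δ ∈ (0,1]. Let z₁,…,z_n be independent centered Bernoulli random variables (z_i = b_i − q_i with b_i ~ Bernoulli(q_i), q_i ∈ [0,1]) and z = (z_i)_{i∈[n]}. Then with probability at least 1 − δ, ‖(D†)ᵀ z‖_∞ ≤ √2 ρ log(2n²/δ). -/
open MeasureTheory ProbabilityTheory Finset Matrix

noncomputable section
namespace OneBit

/-- `D` is the edge–vertex incidence matrix of the undirected graph `G`:
rows indexed by edges `e = (i,j)` with `i < j`, carrying `1` at `min(i,j)` and `-1` at `max(i,j)`. -/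
def IsIncidenceMatrix {n m : ℕ} (G : SimpleGraph (Fin n)) (D : Matrix (Fin m) (Fin n) ℝ) : Prop :=
  ∃ ends : Fin m → Fin n × Fin n,
    Function.Injective ends ∧
    (∀ e, (ends e).1 < (ends e).2 ∧ G.Adj (ends e).1 (ends e).2) ∧
    (∀ i j : Fin n, i < j → G.Adj i j → ∃ e, ends e = (i, j)) ∧
    (∀ e k, D e k = if k = (ends e).1 then 1 else if k = (ends e).2 then -1 else 0)

/-- `Dd` is the Moore–Penrose pseudoinverse of `D`. -/
def IsMoorePenrose {n m : ℕ} (D : Matrix (Fin m) (Fin n) ℝ) (Dd : Matrix (Fin n) (Fin m) ℝ) : Prop :=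
  D * Dd * D = D ∧ Dd * D * Dd = Dd ∧ (D * Dd)ᵀ = D * Dd ∧ (Dd * D)ᵀ = Dd * D

/-- Inverse scaling factor `ρ = max_j ‖s_j‖₂`, the columns `s_j` of `D†`. -/
def rho {n m : ℕ} (Dd : Matrix (Fin n) (Fin m) ℝ) : ℝ :=
  ⨆ j : Fin m, Real.sqrt (∑ i, (Dd i j) ^ 2)

/-- Euclidean norm on `ℝⁿ`. -/
def l2 {n : ℕ} (p : Fin n → ℝ) : ℝ := Real.sqrt (∑ i, (p i) ^ 2)

/-- `‖(Dp)_T‖₁`, the ℓ₁ norm of `Dp` restricted to the coordinates in `T`. -/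
def tvOn {n m : ℕ} (D : Matrix (Fin m) (Fin n) ℝ) (T : Finset (Fin m)) (p : Fin n → ℝ) : ℝ :=
  ∑ e ∈ T, |D.mulVec p e|

/-- Compatibility factor `κ_T = inf_{p ∈ [0,1]^n, (Dp)_T ≠ 0} √|T| ‖p‖₂ / ‖(Dp)_T‖₁`. -/
def compat {n m : ℕ} (D : Matrix (Fin m) (Fin n) ℝ) (T : Finset (Fin m)) : ℝ :=
  sInf {x : ℝ | ∃ p : Fin n → ℝ, (∀ i, p i ∈ Set.Icc (0:ℝ) 1) ∧ tvOn D T p ≠ 0 ∧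
    x = Real.sqrt T.card * l2 p / tvOn D T p}

/-- `‖p‖₀`, the number of nonzero coordinates. -/
def supp0 {n : ℕ} (p : Fin n → ℝ) : ℕ := Nat.card {i // p i ≠ 0}

/-! Each coordinate `∑ᵢ s_j(i) zᵢ` of `(D†)ᵀ z` is a weighted sum of independent centred
variables with values in intervals of length one, so by Hoeffding's lemma it is sub-Gaussian with
variance proxy `‖s_j‖² / 4 ≤ ρ² / 4`. The Chernoff bound then gives
`P(|∑ᵢ s_j(i) zᵢ| > √2 ρ L) ≤ 2 e^{-L}` as soon as `L ≥ 1/4`, and a union bound over the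
`m ≤ n²` edges with `L = log (2n²/δ)` leaves a failure probability of at most `δ`. -/

section Concentration

variable {Ω : Type*} [MeasurableSpace Ω] {μ : Measure Ω}

lemma measure_forall_ge_one_sub [IsProbabilityMeasure μ] {ι : Type*} [Fintype ι]
    (P : ι → Ω → Prop) {δ : ℝ} (h : ∑ i, μ.real {ω | ¬ P i ω} ≤ δ) :
    ENNReal.ofReal (1 - δ) ≤ μ {ω | ∀ i, P i ω} := by
  have hδ : 0 ≤ δ := (sum_nonneg fun i _ => measureReal_nonneg).trans h
  have hbad : μ (⋃ i, {ω | ¬ P i ω}) ≤ ENNReal.ofReal δ :=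
    calc μ (⋃ i, {ω | ¬ P i ω}) ≤ ∑ i, μ {ω | ¬ P i ω} := measure_iUnion_fintype_le μ _
      _ = ENNReal.ofReal (∑ i, μ.real {ω | ¬ P i ω}) := by
        rw [ENNReal.ofReal_sum_of_nonneg fun i _ => measureReal_nonneg]
        exact sum_congr rfl fun i _ => (ofReal_measureReal (measure_ne_top μ _)).symm
      _ ≤ ENNReal.ofReal δ := ENNReal.ofReal_le_ofReal h
  have hcover : (1 : ENNReal) ≤ μ {ω | ∀ i, P i ω} + μ (⋃ i, {ω | ¬ P i ω}) := by
    rw [← measure_univ (μ := μ)]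
    refine (measure_mono fun ω _ => ?_).trans (measure_union_le _ _)
    by_cases hω : ∀ i, P i ω
    · exact Or.inl hω
    · push Not at hω
      exact Or.inr (Set.mem_iUnion.mpr hω)
  calc ENNReal.ofReal (1 - δ) ≤ 1 - ENNReal.ofReal δ := by
        rw [← ENNReal.ofReal_one, ENNReal.ofReal_sub _ hδ]
    _ ≤ μ {ω | ∀ i, P i ω} := tsub_le_iff_right.mpr (hcover.trans (by gcongr))

lemma integral_eq_measureReal_of_forall_eq_zero_or_one {f : Ω → ℝ} (hf : Measurable f)
    (hv : ∀ ω, f ω = 0 ∨ f ω = 1) : ∫ ω, f ω ∂μ = μ.real {ω | f ω = 1} := by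
  have hind : (fun ω => f ω) = Set.indicator {ω | f ω = 1} 1 := by
    funext ω
    rcases hv ω with h | h <;> simp [h]
  rw [hind]
  exact integral_indicator_one (hf (measurableSet_singleton 1))

/- The hypothesis `2 * c * t ≤ ε ^ 2` stands for `t ≤ ε ^ 2 / (2 * c)`; in this form it also
covers `c = 0`, where `X = 0` almost surely. -/
lemma _root_.ProbabilityTheory.HasSubgaussianMGF.measureReal_lt_abs_le [IsFiniteMeasure μ]
    {X : Ω → ℝ} {c : NNReal} (hX : HasSubgaussianMGF X c μ) {ε t : ℝ} (hε : 0 ≤ ε)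
    (ht : 2 * c * t ≤ ε ^ 2) :
    μ.real {ω | ε < |X ω|} ≤ 2 * Real.exp (-t) := by
  rcases eq_zero_or_pos c with rfl | hc
  · have hnull : μ {ω | ε < |X ω|} = 0 := by
      refine measure_mono_null ?_ (ae_iff.mp hX.ae_eq_zero_of_hasSubgaussianMGF_zero)
      intro ω hω h0
      simp only [Set.mem_ofPred_eq, h0, Pi.zero_apply, abs_zero] at hω
      linarith
    rw [measureReal_def, hnull, ENNReal.toReal_zero]
    positivity
  · have hexp : Real.exp (-ε ^ 2 / (2 * c)) ≤ Real.exp (-t) := by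
      rw [Real.exp_le_exp, neg_div, neg_le_neg_iff, le_div_iff₀ (by positivity)]
      linarith
    calc μ.real {ω | ε < |X ω|} ≤ μ.real ({ω | ε ≤ X ω} ∪ {ω | ε ≤ (-X) ω}) :=
          measureReal_mono fun ω (hω : ε < |X ω|) => (lt_abs.mp hω).imp le_of_lt le_of_lt
      _ ≤ μ.real {ω | ε ≤ X ω} + μ.real {ω | ε ≤ (-X) ω} := measureReal_union_le _ _
      _ ≤ Real.exp (-t) + Real.exp (-t) :=
          add_le_add ((hX.measure_ge_le hε).trans hexp) ((hX.neg.measure_ge_le hε).trans hexp)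
      _ = 2 * Real.exp (-t) := (two_mul _).symm

variable [IsProbabilityMeasure μ] {ι : Type*} [Fintype ι] {Y : ι → Ω → ℝ} {q : ι → ℝ}

lemma hasSubgaussianMGF_sum_mul_sub_of_mem_Icc (hindep : iIndepFun Y μ)
    (hmeas : ∀ i, AEMeasurable (Y i) μ) (hY : ∀ i, ∀ᵐ ω ∂μ, Y i ω ∈ Set.Icc 0 1)
    (hq : ∀ i, μ[Y i] = q i) (a : ι → ℝ) :
    HasSubgaussianMGF (fun ω => ∑ i, a i * (Y i ω - q i)) ((∑ i, ‖a i‖₊ ^ 2) / 4) μ := by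
  have hcentered : ∀ i, HasSubgaussianMGF (fun ω => Y i ω - q i) ((‖(1 : ℝ) - 0‖₊ / 2) ^ 2) μ :=
    fun i => hq i ▸ hasSubgaussianMGF_of_mem_Icc (hmeas i) (hY i)
  have hsum : HasSubgaussianMGF (fun ω => ∑ i, a i * (Y i ω - q i))
      (∑ i, ⟨a i ^ 2, sq_nonneg _⟩ * (‖(1 : ℝ) - 0‖₊ / 2) ^ 2) μ :=
    HasSubgaussianMGF.sum_of_iIndepFun (s := univ)
      (hindep.comp (fun i x => a i * (x - q i)) fun i => by fun_prop)
      fun i _ => (hcentered i).const_mul (a i)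
  convert hsum using 1
  apply NNReal.eq
  push_cast
  rw [sum_div]
  refine sum_congr rfl fun i _ => ?_
  change ‖a i‖ ^ 2 / 4 = a i ^ 2 * (((‖(1 : ℝ) - 0‖₊ / 2) ^ 2 : NNReal) : ℝ)
  norm_num [div_eq_mul_inv]

lemma measureReal_sqrt_two_mul_lt_abs_sum_mul_sub_le (hindep : iIndepFun Y μ)
    (hmeas : ∀ i, AEMeasurable (Y i) μ) (hY : ∀ i, ∀ᵐ ω ∂μ, Y i ω ∈ Set.Icc 0 1)
    (hq : ∀ i, μ[Y i] = q i) (a : ι → ℝ) {ρ L : ℝ} (hρ : 0 ≤ ρ) (ha : ∑ i, a i ^ 2 ≤ ρ ^ 2)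
    (hL : 1 / 4 ≤ L) :
    μ.real {ω | Real.sqrt 2 * ρ * L < |∑ i, a i * (Y i ω - q i)|} ≤ 2 * Real.exp (-L) := by
  have hL0 : 0 ≤ L := by linarith
  refine (hasSubgaussianMGF_sum_mul_sub_of_mem_Icc hindep hmeas hY hq a).measureReal_lt_abs_le
    (by positivity) ?_
  push_cast
  simp only [Real.norm_eq_abs, sq_abs, mul_pow, Real.sq_sqrt zero_le_two]
  nlinarith [mul_le_mul_of_nonneg_right ha hL0,
    mul_nonneg (sq_nonneg ρ) (mul_nonneg hL0 (by linarith : 0 ≤ 4 * L - 1))]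

end Concentration

lemma IsIncidenceMatrix.card_le_sq {n m : ℕ} {G : SimpleGraph (Fin n)}
    {D : Matrix (Fin m) (Fin n) ℝ} (hD : IsIncidenceMatrix G D) : m ≤ n ^ 2 := by
  obtain ⟨ends, hends, -⟩ := hD
  simpa [sq] using Fintype.card_le_of_injective ends hends

lemma rho_nonneg {n m : ℕ} (Dd : Matrix (Fin n) (Fin m) ℝ) : 0 ≤ rho Dd :=
  Real.iSup_nonneg fun _ => Real.sqrt_nonneg _

lemma sum_sq_le_rho_sq {n m : ℕ} (Dd : Matrix (Fin n) (Fin m) ℝ) (j : Fin m) :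
    ∑ i, Dd i j ^ 2 ≤ rho Dd ^ 2 := by
  have hcol : Real.sqrt (∑ i, Dd i j ^ 2) ≤ rho Dd :=
    le_ciSup (f := fun j => Real.sqrt (∑ i, Dd i j ^ 2)) (Set.finite_range _).bddAbove j
  simpa [Real.sqrt_le_left, Real.sq_sqrt (sum_nonneg fun i _ => sq_nonneg (Dd i j))] using
    pow_le_pow_left₀ (Real.sqrt_nonneg _) hcol 2

lemma one_div_four_le_log_two_mul_div {x δ : ℝ} (hx : 1 ≤ x) (hδ : δ ∈ Set.Ioc 0 1) :
    1 / 4 ≤ Real.log (2 * x / δ) := by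
  have h2 : Real.log 2 ≤ Real.log (2 * x / δ) :=
    Real.log_le_log two_pos (by rw [le_div_iff₀ hδ.1]; nlinarith [hδ.2])
  linarith [Real.log_two_gt_d9]

theorem noise_term_bound_general
    {n m : ℕ} (G : SimpleGraph (Fin n)) (D : Matrix (Fin m) (Fin n) ℝ)
    (Dd : Matrix (Fin n) (Fin m) ℝ)
    (hD : IsIncidenceMatrix G D)
    {Ω : Type*} [MeasurableSpace Ω] (μ : Measure Ω) [IsProbabilityMeasure μ]
    (q : Fin n → ℝ) (hq : ∀ i, q i ∈ Set.Icc (0:ℝ) 1)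
    (b : Ω → Fin n → ℝ)
    (hmeas : ∀ i, Measurable fun ω => b ω i)
    (hval : ∀ ω i, b ω i = 0 ∨ b ω i = 1)
    (hber : ∀ i, μ {ω | b ω i = 1} = ENNReal.ofReal (q i))
    (hindep : iIndepFun (fun i ω => b ω i) μ)
    (δ : ℝ) (hδ : δ ∈ Set.Ioc (0:ℝ) 1) :
    ENNReal.ofReal (1 - δ) ≤
      μ {ω | ∀ j : Fin m, |∑ i, Dd i j * (b ω i - q i)| ≤
        Real.sqrt 2 * rho Dd * Real.log (2 * (n:ℝ) ^ 2 / δ)} := by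
  have hmn : (m : ℝ) ≤ n ^ 2 := by exact_mod_cast hD.card_le_sq
  have hmean : ∀ i, μ[fun ω => b ω i] = q i := fun i => by
    rw [integral_eq_measureReal_of_forall_eq_zero_or_one (hmeas i) (hval · i), measureReal_def,
      hber, ENNReal.toReal_ofReal (hq i).1]
  have hunit : ∀ i, ∀ᵐ ω ∂μ, b ω i ∈ Set.Icc 0 1 := fun i =>
    ae_of_all _ fun ω => by rcases hval ω i with h | h <;> simp [h]
  refine measure_forall_ge_one_sub _ ?_
  calc _ ≤ ∑ _j : Fin m, δ / n ^ 2 := sum_le_sum fun j _ => by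
        have hn : (1 : ℝ) ≤ n ^ 2 := le_trans (by exact_mod_cast j.pos) hmn
        have hexp : 2 * Real.exp (-Real.log (2 * n ^ 2 / δ)) = δ / n ^ 2 := by
          rw [Real.exp_neg, Real.exp_log (div_pos (by linarith) hδ.1)]
          field_simp
        simpa only [not_le, hexp] using
          measureReal_sqrt_two_mul_lt_abs_sum_mul_sub_le hindep (fun i => (hmeas i).aemeasurable)
            hunit hmean (fun i => Dd i j) (rho_nonneg Dd) (sum_sq_le_rho_sq Dd j)
            (one_div_four_le_log_two_mul_div hn hδ)
    _ = m * (δ / n ^ 2) := by simp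
    _ ≤ δ := by
      rcases n.eq_zero_or_pos with rfl | hn
      · simp [hδ.1.le]
      · rw [mul_div_assoc', div_le_iff₀ (by positivity)]
        nlinarith [hδ.1]

/-- Lemma 2 (noise term): if `z_i = b_i - q_i` with `b_i ~ Bernoulli(q_i)` independent,
then with probability at least `1 - δ`, `‖(D†)ᵀ z‖_∞ ≤ √2 ρ log(2n²/δ)`. -/
theorem noise_term_bound
    {n m : ℕ} (G : SimpleGraph (Fin n)) (D : Matrix (Fin m) (Fin n) ℝ)
    (Dd : Matrix (Fin n) (Fin m) ℝ)
    (hD : IsIncidenceMatrix G D) (hG : G.Connected) (hDd : IsMoorePenrose D Dd)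
    {Ω : Type*} [MeasurableSpace Ω] (μ : Measure Ω) [IsProbabilityMeasure μ]
    (q : Fin n → ℝ) (hq : ∀ i, q i ∈ Set.Icc (0:ℝ) 1)
    (b : Ω → Fin n → ℝ)
    (hmeas : ∀ i, Measurable fun ω => b ω i)
    (hval : ∀ ω i, b ω i = 0 ∨ b ω i = 1)
    (hber : ∀ i, μ {ω | b ω i = 1} = ENNReal.ofReal (q i))
    (hindep : iIndepFun (fun i ω => b ω i) μ)
    (δ : ℝ) (hδ : δ ∈ Set.Ioc (0:ℝ) 1) :
    ENNReal.ofReal (1 - δ) ≤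
      μ {ω | ∀ j : Fin m, |∑ i, Dd i j * (b ω i - q i)| ≤
        Real.sqrt 2 * rho Dd * Real.log (2 * (n:ℝ) ^ 2 / δ)} :=
  noise_term_bound_general G D Dd hD μ q hq b hmeas hval hber hindep δ hδ

end OneBit
end
end

section
/- Let G be the complete graph on n vertices, with observations y_i ~ Bernoulli(p*_i) independent, p* ∈ [0,1]^n, s = ‖p*‖₀, and the one-bit TV denoiser p̂ computed with λ = (√2 ρ / n) log(4n³). Then there exists a numerical constant C such that, with probability at least 1 − 4/n, ‖p̂ − p*‖₂² ≤ C ( (‖Dp*‖₁ + s) / n ) log(n). -/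
/-!
On the complete graph `DᵀD = n • 1 - J`, so `D† = Dᵀ / n`, `ρ = √2 / n` and `n²λ = 2 log (4n³)`.
The same identity splits the noise term of the basic inequality of the denoiser: with
`ε = y - p*` and `δ = p̂ - p*`, `n ⟪ε, δ⟫ = ⟪Dε, Dδ⟫ + (∑ ε)(∑ δ)`. Since `|(Dε)_e| ≤ 2`, the
first part is absorbed by the penalty as soon as `n²λ ≥ 4`, and the second is at most
`2 (∑ ε)² + n ‖δ‖² / 2` by AM-GM and Cauchy-Schwarz. This gives the deterministic bound
`n ‖δ‖² ≤ 2 (n²λ + 4) ‖Dp*‖₁ + 4 (∑ ε)²`. Finally `ε_i = 0` almost surely off the support of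
`p*`, so Hoeffding's inequality bounds `(∑ ε)²` by `s log n` outside an event of probability
`2 / n²`.
-/

open MeasureTheory ProbabilityTheory Finset Matrix

noncomputable section
namespace OneBit

/-- `Y` has independent coordinates, with `Y ω i ~ Bernoulli(p i)` taking values in `{0,1}`. -/
def IsBernoulliFamily {Ω : Type*} [MeasurableSpace Ω] {n : ℕ} (μ : Measure Ω)
    (Y : Ω → Fin n → ℝ) (p : Fin n → ℝ) : Prop :=
  (∀ i, Measurable fun ω => Y ω i) ∧
  (∀ ω i, Y ω i = 0 ∨ Y ω i = 1) ∧
  (∀ i, μ {ω | Y ω i = 1} = ENNReal.ofReal (p i)) ∧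
  iIndepFun (fun i ω => Y ω i) μ

/-- The one-bit TV denoiser: `phat ∈ [0,1]^n` minimizes
`(1/n) Σᵢ (yᵢ - pᵢ)² + λ ‖Dp‖₁` over `p ∈ ℝⁿ`. -/
def IsTVDenoiser {n m : ℕ} (D : Matrix (Fin m) (Fin n) ℝ) (lam : ℝ)
    (y phat : Fin n → ℝ) : Prop :=
  (∀ i, phat i ∈ Set.Icc (0:ℝ) 1) ∧
  ∀ q : Fin n → ℝ,
    (1 / (n:ℝ)) * ∑ i, (y i - phat i) ^ 2 + lam * ∑ e, |D.mulVec phat e| ≤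
    (1 / (n:ℝ)) * ∑ i, (y i - q i) ^ 2 + lam * ∑ e, |D.mulVec q e|

lemma sum_filter_lt_mul_sub_mul_sub {ι : Type*} [Fintype ι] [LinearOrder ι] (x z : ι → ℝ) :
    ∑ q : ι × ι with q.1 < q.2, (x q.1 - x q.2) * (z q.1 - z q.2) =
      Fintype.card ι * (x ⬝ᵥ z) - (∑ i, x i) * ∑ i, z i := by
  set g : ι × ι → ℝ := fun q => (x q.1 - x q.2) * (z q.1 - z q.2)
  have hsplit : ∀ q : ι × ι,
      g q = (if q.1 < q.2 then g q else 0) + if q.2 < q.1 then g q else 0 := by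
    rintro ⟨i, j⟩
    rcases lt_trichotomy i j with h | rfl | h
    · simp [h, h.not_gt]
    · simp [g]
    · simp [h, h.not_gt]
  have hswap : ∑ q : ι × ι with q.2 < q.1, g q = ∑ q : ι × ι with q.1 < q.2, g q :=
    sum_equiv (Equiv.prodComm ι ι) (by simp) fun q _ => by
      simp only [g, Equiv.prodComm_apply, Prod.fst_swap, Prod.snd_swap]
      ring
  have hfull : ∑ q, g q = 2 * (Fintype.card ι * (x ⬝ᵥ z) - (∑ i, x i) * ∑ i, z i) := by
    simp only [g, Fintype.sum_prod_type, dotProduct, mul_sub, sub_mul, sum_sub_distrib,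
      ← mul_sum, ← sum_mul, sum_const, card_univ, nsmul_eq_mul]
    simp only [mul_left_comm _ (Fintype.card ι : ℝ), ← mul_sum]
    ring
  rw [Fintype.sum_congr _ _ hsplit, sum_add_distrib, ← sum_filter,
    ← sum_filter, hswap] at hfull
  linarith

section IncidenceMatrix

variable {n m : ℕ} {G : SimpleGraph (Fin n)} {D : Matrix (Fin m) (Fin n) ℝ}

lemma mulVec_apply_of_incidence_row {e : Fin m} {a b : Fin n} (hab : a ≠ b)
    (hrow : ∀ k, D e k = if k = a then 1 else if k = b then -1 else 0) (x : Fin n → ℝ) :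
    (D *ᵥ x) e = x a - x b := by
  have : D e = Pi.single a 1 - Pi.single b 1 := by
    ext k
    rw [hrow]
    by_cases hka : k = a
    · subst hka; simp [hab]
    · by_cases hkb : k = b
      · subst hkb; simp [hka]
      · simp [hka, hkb]
  change D e ⬝ᵥ x = _
  rw [this, sub_dotProduct, single_dotProduct, single_dotProduct, one_mul, one_mul]

lemma IsIncidenceMatrix.exists_mulVec_apply (hD : IsIncidenceMatrix G D) (e : Fin m) :
    ∃ a b, D e a = 1 ∧ D e b = -1 ∧ ∀ x, (D *ᵥ x) e = x a - x b := by
  obtain ⟨ends, -, hends, -, hrow⟩ := hD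
  have hab := (hends e).1.ne
  exact ⟨_, _, by simp [hrow], by simp [hrow, hab.symm],
    mulVec_apply_of_incidence_row hab (hrow e)⟩

lemma IsIncidenceMatrix.abs_mulVec_apply_le (hD : IsIncidenceMatrix G D) {x : Fin n → ℝ}
    (hx : ∀ i, |x i| ≤ 1) (e : Fin m) : |(D *ᵥ x) e| ≤ 2 := by
  obtain ⟨a, b, -, -, hmulVec⟩ := hD.exists_mulVec_apply e
  rw [hmulVec]
  linarith [abs_sub (x a) (x b), hx a, hx b]

lemma IsIncidenceMatrix.mul_all_ones_eq_zero (hD : IsIncidenceMatrix G D) :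
    D * (Matrix.of fun _ _ => 1 : Matrix (Fin n) (Fin n) ℝ) = 0 := by
  ext e k
  obtain ⟨a, b, -, -, hmulVec⟩ := hD.exists_mulVec_apply e
  simpa [Matrix.mul_apply, Matrix.mulVec, dotProduct] using hmulVec fun _ => 1

lemma IsIncidenceMatrix.sum_sq_row_eq_two (hD : IsIncidenceMatrix G D) (e : Fin m) :
    ∑ k, D e k ^ 2 = 2 := by
  obtain ⟨a, b, ha, hb, hmulVec⟩ := hD.exists_mulVec_apply e
  -- `(D *ᵥ D e) e` is the squared norm of row `e`.
  have := hmulVec (D e)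
  simp only [Matrix.mulVec, dotProduct, ha, hb] at this
  simp only [sq, this]
  norm_num

lemma IsIncidenceMatrix.dotProduct_mulVec_top (hD : IsIncidenceMatrix ⊤ D) (x z : Fin n → ℝ) :
    D *ᵥ x ⬝ᵥ D *ᵥ z = n * (x ⬝ᵥ z) - (∑ i, x i) * ∑ i, z i := by
  obtain ⟨ends, hinj, hends, hsurj, hrow⟩ := hD
  have himage : univ.image ends = univ.filter (fun q : Fin n × Fin n => q.1 < q.2) := by
    ext q
    simp only [mem_image, mem_univ, true_and, mem_filter]
    refine ⟨fun ⟨e, he⟩ => he ▸ (hends e).1, fun hq => hsurj _ _ hq ?_⟩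
    exact (SimpleGraph.top_adj _ _).mpr hq.ne
  have hpairs := sum_filter_lt_mul_sub_mul_sub x z
  rw [Fintype.card_fin, ← himage, sum_image hinj.injOn] at hpairs
  simpa only [dotProduct, mulVec_apply_of_incidence_row (hends _).1.ne (hrow _)] using hpairs

lemma IsIncidenceMatrix.transpose_mul_self_top (hD : IsIncidenceMatrix ⊤ D) :
    Dᵀ * D = (n : ℝ) • 1 - (Matrix.of fun _ _ => 1 : Matrix (Fin n) (Fin n) ℝ) := by
  ext k l
  have := hD.dotProduct_mulVec_top (Pi.single k 1) (Pi.single l 1)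
  simp only [Matrix.mulVec_single_one, dotProduct, Matrix.col_apply] at this
  rw [Matrix.mul_apply]
  by_cases hkl : k = l
  · simpa [hkl, Pi.single_apply] using this
  · simpa [hkl, Ne.symm hkl, Pi.single_apply] using this

lemma IsIncidenceMatrix.mul_transpose_mul_self_top (hD : IsIncidenceMatrix ⊤ D) :
    D * Dᵀ * D = (n : ℝ) • D := by
  rw [Matrix.mul_assoc, hD.transpose_mul_self_top, Matrix.mul_sub, hD.mul_all_ones_eq_zero,
    Matrix.mul_smul, Matrix.mul_one, sub_zero]

lemma IsIncidenceMatrix.nonempty_top (hD : IsIncidenceMatrix ⊤ D) (hn : 2 ≤ n) :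
    Nonempty (Fin m) := by
  obtain ⟨ends, -, -, hsurj, -⟩ := hD
  have h01 : (⟨0, by omega⟩ : Fin n) < ⟨1, by omega⟩ := Fin.mk_lt_mk.mpr one_pos
  obtain ⟨e, -⟩ := hsurj _ _ h01 ((SimpleGraph.top_adj _ _).mpr h01.ne)
  exact ⟨e⟩

end IncidenceMatrix

section MoorePenrose

variable {n m : ℕ} {D : Matrix (Fin m) (Fin n) ℝ}

lemma IsMoorePenrose.unique {B C : Matrix (Fin n) (Fin m) ℝ} (hB : IsMoorePenrose D B)
    (hC : IsMoorePenrose D C) : B = C := by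
  obtain ⟨hB1, hB2, hB3, hB4⟩ := hB
  obtain ⟨hC1, hC2, hC3, hC4⟩ := hC
  have hDB : D * B = D * C := calc
    D * B = (D * C * D * B)ᵀ := by rw [hC1, hB3]
    _ = D * B * D * C := by
      rw [Matrix.mul_assoc (D * C), Matrix.transpose_mul, hB3, hC3, ← Matrix.mul_assoc]
    _ = D * C := by rw [hB1]
  have hBD : B * D = C * D := calc
    B * D = (B * (D * C * D))ᵀ := by rw [hC1, hB4]
    _ = (B * D * C * D)ᵀ := by simp only [Matrix.mul_assoc]
    _ = C * D * B * D := by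
      rw [Matrix.mul_assoc (B * D), Matrix.transpose_mul, hB4, hC4, ← Matrix.mul_assoc]
    _ = C * D := by rw [Matrix.mul_assoc C, Matrix.mul_assoc C, hB1]
  calc B = B * D * B := hB2.symm
    _ = C * D * C := by rw [hBD, Matrix.mul_assoc, hDB, ← Matrix.mul_assoc]
    _ = C := hC2

lemma isMoorePenrose_inv_smul_transpose {c : ℝ} (hc : c ≠ 0) (h : D * Dᵀ * D = c • D) :
    IsMoorePenrose D (c⁻¹ • Dᵀ) := by
  have h' : Dᵀ * D * Dᵀ = c • Dᵀ := by
    simpa [Matrix.transpose_mul, Matrix.mul_assoc] using congrArg Matrix.transpose h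
  refine ⟨?_, ?_, ?_, ?_⟩
  · rw [Matrix.mul_smul, Matrix.smul_mul, h, smul_smul, inv_mul_cancel₀ hc, one_smul]
  · rw [Matrix.smul_mul, Matrix.smul_mul, Matrix.mul_smul, h', smul_smul, smul_smul,
      mul_assoc, inv_mul_cancel₀ hc, mul_one]
  · rw [Matrix.mul_smul, Matrix.transpose_smul, Matrix.transpose_mul, Matrix.transpose_transpose]
  · rw [Matrix.smul_mul, Matrix.transpose_smul, Matrix.transpose_mul, Matrix.transpose_transpose]

lemma rho_inv_smul_transpose [Nonempty (Fin m)] {c r : ℝ} (hc : 0 < c)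
    (hrow : ∀ e, ∑ k, D e k ^ 2 = r) : rho (c⁻¹ • Dᵀ) = √r / c := by
  have hcol : ∀ e, √(∑ k, (c⁻¹ • Dᵀ) k e ^ 2) = √r / c := by
    intro e
    simp only [Matrix.smul_apply, Matrix.transpose_apply, smul_eq_mul, mul_pow, ← mul_sum,
      hrow]
    rw [Real.sqrt_mul (sq_nonneg _), Real.sqrt_sq (inv_nonneg.mpr hc.le), inv_mul_eq_div]
  simp only [rho, hcol, ciSup_const]

lemma IsIncidenceMatrix.rho_top {Dd : Matrix (Fin n) (Fin m) ℝ} (hD : IsIncidenceMatrix ⊤ D)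
    (hDd : IsMoorePenrose D Dd) (hn : 2 ≤ n) : rho Dd = √2 / n := by
  have hn0 : (0 : ℝ) < n := by positivity
  have := hD.nonempty_top hn
  rw [hDd.unique (isMoorePenrose_inv_smul_transpose hn0.ne' hD.mul_transpose_mul_self_top),
    rho_inv_smul_transpose hn0 hD.sum_sq_row_eq_two]

end MoorePenrose

lemma ofReal_one_sub_le_measure_compl {Ω : Type*} [MeasurableSpace Ω] {μ : Measure Ω}
    [IsProbabilityMeasure μ] {s : Set Ω} {δ : ℝ} (hδ : 0 ≤ δ) (hs : μ s ≤ ENNReal.ofReal δ) :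
    ENNReal.ofReal (1 - δ) ≤ μ sᶜ := by
  rw [ENNReal.ofReal_sub _ hδ, ENNReal.ofReal_one, tsub_le_iff_right, ← measure_univ (μ := μ)]
  calc μ Set.univ ≤ μ sᶜ + μ sᶜᶜ := measure_univ_le_add_compl _
    _ ≤ μ sᶜ + ENNReal.ofReal δ := by rw [compl_compl]; gcongr

lemma supp0_eq_card {n : ℕ} (p : Fin n → ℝ) : supp0 p = #{i | p i ≠ 0} := by
  rw [supp0, Nat.card_eq_fintype_card, Fintype.card_subtype]

section Bernoulli

open scoped NNReal

variable {Ω : Type*} [MeasurableSpace Ω] {μ : Measure Ω} {n : ℕ} {Y : Ω → Fin n → ℝ}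
  {p : Fin n → ℝ}

lemma IsBernoulliFamily.integral_eq (hY : IsBernoulliFamily μ Y p) {i : Fin n} (hp : 0 ≤ p i) :
    μ[fun ω => Y ω i] = p i := by
  have hind : (fun ω => Y ω i) = {ω | Y ω i = 1}.indicator 1 := by
    ext ω
    rcases hY.2.1 ω i with h | h <;> simp [Set.indicator, h]
  have hs : MeasurableSet {ω | Y ω i = 1} := hY.1 i (measurableSet_singleton 1)
  rw [hind, integral_indicator_one hs, measureReal_def,
    hY.2.2.1 i, ENNReal.toReal_ofReal hp]

lemma IsBernoulliFamily.hasSubgaussianMGF [IsProbabilityMeasure μ] (hY : IsBernoulliFamily μ Y p)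
    {i : Fin n} (hp : 0 ≤ p i) : HasSubgaussianMGF (fun ω => Y ω i - p i) (1 / 4) μ := by
  have hIcc : ∀ᵐ ω ∂μ, Y ω i ∈ Set.Icc (0 : ℝ) 1 :=
    ae_of_all _ fun ω => by rcases hY.2.1 ω i with h | h <;> simp [h]
  have := hasSubgaussianMGF_of_mem_Icc (hY.1 i).aemeasurable hIcc
  rw [hY.integral_eq hp] at this
  convert this using 1
  norm_num

lemma IsBernoulliFamily.measure_card_mul_lt_sq_sum_le [IsProbabilityMeasure μ]
    (hY : IsBernoulliFamily μ Y p) (hp : ∀ i, 0 ≤ p i) (T : Finset (Fin n)) {r : ℝ} (hr : 0 ≤ r) :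
    μ {ω | #T * r < (∑ i ∈ T, (Y ω i - p i)) ^ 2} ≤ ENNReal.ofReal (2 * Real.exp (-2 * r)) := by
  rcases T.eq_empty_or_nonempty with rfl | hT
  · simp
  set S : Ω → ℝ := fun ω => ∑ i ∈ T, (Y ω i - p i)
  have hS : HasSubgaussianMGF S (∑ _i ∈ T, 1 / 4) μ :=
    HasSubgaussianMGF.sum_of_iIndepFun (hY.2.2.2.comp _ fun i => measurable_id.sub_const (p i))
      fun i _ => hY.hasSubgaussianMGF (hp i)
  set t := √(#T * r)
  have ht : t ^ 2 = #T * r := Real.sq_sqrt (by positivity)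
  have hexp : -t ^ 2 / (2 * ((∑ _i ∈ T, (1 / 4 : ℝ≥0) : ℝ≥0) : ℝ)) = -2 * r := by
    have : (0 : ℝ) < #T := by exact_mod_cast hT.card_pos
    simp only [sum_const, nsmul_eq_mul, NNReal.coe_mul, NNReal.coe_natCast, one_div,
      NNReal.coe_inv, NNReal.coe_ofNat, ht]
    field_simp
    ring
  have htail : ∀ X : Ω → ℝ, HasSubgaussianMGF X (∑ _i ∈ T, 1 / 4) μ →
      μ {ω | t ≤ X ω} ≤ ENNReal.ofReal (Real.exp (-2 * r)) := fun X hX => by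
    rw [← ofReal_measureReal, ← hexp]
    exact ENNReal.ofReal_le_ofReal (hX.measure_ge_le (Real.sqrt_nonneg _))
  have hsub : {ω | #T * r < S ω ^ 2} ⊆ {ω | t ≤ S ω} ∪ {ω | t ≤ (-S) ω} := by
    intro ω hω
    have : t < |S ω| := by
      rw [Set.mem_ofPred_eq, ← ht, ← sq_abs (S ω)] at hω
      exact lt_of_pow_lt_pow_left₀ 2 (abs_nonneg _) hω
    rcases abs_cases (S ω) with ⟨h, -⟩ | ⟨h, -⟩
    · exact Or.inl (show t ≤ S ω by linarith)
    · exact Or.inr (show t ≤ -S ω by linarith)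
  calc μ {ω | #T * r < S ω ^ 2}
      ≤ μ {ω | t ≤ S ω} + μ {ω | t ≤ (-S) ω} := (measure_mono hsub).trans (measure_union_le _ _)
    _ ≤ ENNReal.ofReal (Real.exp (-2 * r)) + ENNReal.ofReal (Real.exp (-2 * r)) :=
      add_le_add (htail S hS) (htail _ hS.neg)
    _ = ENNReal.ofReal (2 * Real.exp (-2 * r)) := by
      rw [← ENNReal.ofReal_add (by positivity) (by positivity), two_mul]

lemma IsBernoulliFamily.ae_sum_sub_eq_sum_support (hY : IsBernoulliFamily μ Y p) :
    ∀ᵐ ω ∂μ, ∑ i, (Y ω i - p i) = ∑ i with p i ≠ 0, (Y ω i - p i) := by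
  have hzero : ∀ i, p i = 0 → ∀ᵐ ω ∂μ, Y ω i = 0 := by
    intro i hi
    refine ae_iff.mpr (measure_mono_null (fun ω hω => ?_) ((hY.2.2.1 i).trans (by simp [hi])))
    exact (hY.2.1 ω i).resolve_left hω
  have hall : ∀ᵐ ω ∂μ, ∀ i, p i = 0 → Y ω i = 0 := ae_all_iff.mpr fun i => by
    by_cases hi : p i = 0
    · filter_upwards [hzero i hi] with ω hω using fun _ => hω
    · exact ae_of_all _ fun ω h => absurd h hi
  filter_upwards [hall] with ω hω
  rw [sum_filter]
  refine sum_congr rfl fun i _ => ?_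
  split_ifs with hi
  · rfl
  · rw [not_not] at hi
    rw [hi, hω i hi, sub_zero]

lemma IsBernoulliFamily.abs_sub_le_one (hY : IsBernoulliFamily μ Y p) {i : Fin n}
    (hp : p i ∈ Set.Icc (0 : ℝ) 1) (ω : Ω) : |Y ω i - p i| ≤ 1 := by
  rw [abs_le]
  rcases hY.2.1 ω i with h | h <;> rw [h] <;> constructor <;> linarith [hp.1, hp.2]

lemma IsBernoulliFamily.measure_supp0_mul_lt_sq_sum_le [IsProbabilityMeasure μ]
    (hY : IsBernoulliFamily μ Y p) (hp : ∀ i, 0 ≤ p i) {r : ℝ} (hr : 0 ≤ r) :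
    μ {ω | supp0 p * r < (∑ i, (Y ω i - p i)) ^ 2} ≤ ENNReal.ofReal (2 * Real.exp (-2 * r)) := by
  refine le_trans (measure_mono_ae ?_) (hY.measure_card_mul_lt_sq_sum_le hp {i | p i ≠ 0} hr)
  filter_upwards [hY.ae_sum_sub_eq_sum_support] with ω hω
  change _ < _ → _ < _
  rw [supp0_eq_card, hω]
  exact id

end Bernoulli

section Denoiser

variable {n m : ℕ} {D : Matrix (Fin m) (Fin n) ℝ} {lam : ℝ} {y phat : Fin n → ℝ}

lemma IsTVDenoiser.sum_sq_sub_le (h : IsTVDenoiser D lam y phat) (hn : n ≠ 0) (q : Fin n → ℝ) :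
    ∑ i, (phat i - q i) ^ 2 ≤ 2 * ∑ i, (y i - q i) * (phat i - q i) +
      n * lam * (∑ e, |(D *ᵥ q) e| - ∑ e, |(D *ᵥ phat) e|) := by
  have hexpand : ∑ i, (y i - phat i) ^ 2 = ∑ i, (y i - q i) ^ 2 -
      2 * ∑ i, (y i - q i) * (phat i - q i) + ∑ i, (phat i - q i) ^ 2 := by
    simp only [mul_sum, ← sum_sub_distrib, ← sum_add_distrib]
    exact sum_congr rfl fun _ _ => by ring
  have hn0 : (0 : ℝ) < n := by positivity
  have hopt := h.2 q
  rw [hexpand] at hopt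
  have hscaled : 1 / (n : ℝ) * ∑ i, (phat i - q i) ^ 2 ≤
      1 / (n : ℝ) * (2 * ∑ i, (y i - q i) * (phat i - q i)) +
        lam * (∑ e, |(D *ᵥ q) e| - ∑ e, |(D *ᵥ phat) e|) := by linarith
  have := mul_le_mul_of_nonneg_left hscaled hn0.le
  rwa [mul_add, ← mul_assoc, ← mul_assoc, mul_one_div_cancel hn0.ne', one_mul, one_mul,
    ← mul_assoc] at this

lemma IsTVDenoiser.complete_graph_sum_sq_sub_le (hD : IsIncidenceMatrix ⊤ D)
    (h : IsTVDenoiser D lam y phat) (hn : n ≠ 0) {q : Fin n → ℝ} (hy : ∀ i, |y i - q i| ≤ 1)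
    (hlam : 4 ≤ n ^ 2 * lam) :
    n * ∑ i, (phat i - q i) ^ 2 ≤
      2 * (n ^ 2 * lam + 4) * ∑ e, |(D *ᵥ q) e| + 4 * (∑ i, (y i - q i)) ^ 2 := by
  set ε : Fin n → ℝ := fun i => y i - q i
  set δ : Fin n → ℝ := fun i => phat i - q i
  have hn0 : (0 : ℝ) < n := by positivity
  have hbasic : ∑ i, δ i ^ 2 ≤ 2 * ∑ i, ε i * δ i +
      n * lam * (∑ e, |(D *ᵥ q) e| - ∑ e, |(D *ᵥ phat) e|) := h.sum_sq_sub_le hn q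
  have hbilin : n * (ε ⬝ᵥ δ) = D *ᵥ ε ⬝ᵥ D *ᵥ δ + (∑ i, ε i) * ∑ i, δ i := by
    rw [hD.dotProduct_mulVec_top]; ring
  have hcross : D *ᵥ ε ⬝ᵥ D *ᵥ δ ≤ 2 * (∑ e, |(D *ᵥ phat) e| + ∑ e, |(D *ᵥ q) e|) := by
    rw [mul_add, mul_sum, mul_sum, ← sum_add_distrib]
    refine sum_le_sum fun e _ => (le_abs_self _).trans ?_
    rw [abs_mul, ← mul_add]
    refine mul_le_mul (hD.abs_mulVec_apply_le hy e) ?_ (abs_nonneg _) zero_le_two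
    rw [show δ = phat - q from rfl, Matrix.mulVec_sub, Pi.sub_apply]
    exact abs_sub _ _
  have hcs : (∑ i, δ i) ^ 2 ≤ n * ∑ i, δ i ^ 2 := by
    simpa using sq_sum_le_card_mul_sum_sq (s := univ) (f := δ)
  have hamgm : 2 * ((∑ i, ε i) * ∑ i, δ i) ≤ 2 * (∑ i, ε i) ^ 2 + (∑ i, δ i) ^ 2 / 2 := by
    nlinarith [sq_nonneg (2 * ∑ i, ε i - ∑ i, δ i)]
  have hV : 0 ≤ ∑ e, |(D *ᵥ phat) e| := sum_nonneg fun _ _ => abs_nonneg _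
  have hΛ : 0 ≤ (n ^ 2 * lam - 4) * ∑ e, |(D *ᵥ phat) e| := mul_nonneg (by linarith) hV
  simp only [dotProduct] at hbilin hcross
  show n * ∑ i, δ i ^ 2 ≤ _
  nlinarith [mul_le_mul_of_nonneg_left hbasic hn0.le]

end Denoiser

lemma two_mul_exp_neg_two_mul_log_le {x : ℝ} (hx : 1 ≤ x) :
    2 * Real.exp (-2 * Real.log x) ≤ 4 / x := by
  have hx0 : 0 < x := by linarith
  rw [show -2 * Real.log x = Real.log ((x ^ 2)⁻¹) by rw [Real.log_inv, Real.log_pow]; ring,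
    Real.exp_log (by positivity), ← div_eq_mul_inv, div_le_div_iff₀ (by positivity) hx0]
  nlinarith

lemma log_bounds_of_five_le {n : ℕ} (hn : 5 ≤ n) :
    1 ≤ Real.log n ∧ 2 ≤ Real.log (4 * n ^ 3) ∧ Real.log (4 * n ^ 3) ≤ 5 * Real.log n := by
  have hn' : (5 : ℝ) ≤ n := by exact_mod_cast hn
  have hlog : 1 ≤ Real.log n :=
    (Real.le_log_iff_exp_le (by linarith)).mpr (by linarith [Real.exp_one_lt_three])
  have hlog4 : Real.log 4 ≤ Real.log ((n : ℝ) ^ 2) := Real.log_le_log (by norm_num) (by nlinarith)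
  rw [Real.log_pow] at hlog4
  rw [Real.log_mul (by norm_num) (by positivity), Real.log_pow]
  push_cast at hlog4 ⊢
  exact ⟨hlog, by linarith [Real.log_nonneg (by norm_num : (1 : ℝ) ≤ 4)], by linarith⟩

/-- Risk bound for the complete graph (Case 2 of the discussion): there is a numerical
constant `C` such that for the one-bit TV denoiser on the complete graph with
`λ = (√2 ρ / n) log(4n³)`, with probability at least `1 - 4/n`,
`‖p̂ - p*‖₂² ≤ C ((‖Dp*‖₁ + s)/n) log(n)`. -/
theorem complete_graph_risk_bound :
    ∃ C : ℝ, 0 < C ∧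
    ∀ (n m : ℕ) (D : Matrix (Fin m) (Fin n) ℝ) (Dd : Matrix (Fin n) (Fin m) ℝ),
      IsIncidenceMatrix (⊤ : SimpleGraph (Fin n)) D → IsMoorePenrose D Dd →
    ∀ (Ω : Type) (_ : MeasurableSpace Ω) (μ : Measure Ω), IsProbabilityMeasure μ →
    ∀ (pstar : Fin n → ℝ), (∀ i, pstar i ∈ Set.Icc (0:ℝ) 1) →
    ∀ (Y : Ω → Fin n → ℝ), IsBernoulliFamily μ Y pstar →
    ∀ (lam : ℝ), lam = Real.sqrt 2 * rho Dd / n * Real.log (4 * (n:ℝ) ^ 3) →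
    ∀ (phat : Ω → Fin n → ℝ), (∀ ω, IsTVDenoiser D lam (Y ω) (phat ω)) →
    ENNReal.ofReal (1 - 4 / n) ≤
      μ {ω | ∑ i, (phat ω i - pstar i) ^ 2 ≤
        C * (((∑ e, |D.mulVec pstar e|) + (supp0 pstar)) / n) * Real.log n} := by
  refine ⟨28, by norm_num, fun n m D Dd hD hDd Ω _ μ _ pstar hpstar Y hY lam hlam phat hphat => ?_⟩
  obtain rfl | hn := eq_or_ne n 0
  · -- every sum over `Fin 0` is empty and `4 / 0 = 0`
    simp
  rcases lt_or_ge n 5 with hn5 | hn5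
  · have : (1 : ℝ) - 4 / n ≤ 0 := by
      rw [sub_nonpos, le_div_iff₀ (by positivity), one_mul]
      exact_mod_cast (by omega : n ≤ 4)
    simp [ENNReal.ofReal_eq_zero.mpr this]
  have hn0 : (0 : ℝ) < n := by positivity
  have hΛ : (n : ℝ) ^ 2 * lam = 2 * Real.log (4 * n ^ 3) := by
    rw [hlam, hD.rho_top hDd (by omega)]
    field_simp
    rw [Real.sq_sqrt zero_le_two]
    ring
  obtain ⟨hlog, hL2, hL5⟩ := log_bounds_of_five_le hn5
  have hbad : μ {ω | supp0 pstar * Real.log n < (∑ i, (Y ω i - pstar i)) ^ 2} ≤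
      ENNReal.ofReal (4 / n) := by
    exact (hY.measure_supp0_mul_lt_sq_sum_le (fun i => (hpstar i).1) (by linarith)).trans
      (ENNReal.ofReal_le_ofReal (two_mul_exp_neg_two_mul_log_le (Nat.one_le_cast.mpr hn.bot_lt)))
  refine (ofReal_one_sub_le_measure_compl (by positivity) hbad).trans (measure_mono fun ω hω => ?_)
  have hrisk := (hphat ω).complete_graph_sum_sq_sub_le hD hn
    (fun i => hY.abs_sub_le_one (hpstar i) ω) (by linarith)
  have hS : (∑ i, (Y ω i - pstar i)) ^ 2 ≤ supp0 pstar * Real.log n := not_lt.mp hω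
  have hcoef : 2 * ((n : ℝ) ^ 2 * lam + 4) ≤ 28 * Real.log n := by linarith
  have hV : 0 ≤ ∑ e, |(D *ᵥ pstar) e| := sum_nonneg fun _ _ => abs_nonneg _
  have hs : (0 : ℝ) ≤ supp0 pstar * Real.log n := by positivity
  rw [Set.mem_ofPred_eq, mul_div_assoc', div_mul_eq_mul_div, le_div_iff₀ hn0]
  nlinarith [mul_le_mul_of_nonneg_right hcoef hV]

end OneBit
end
end
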